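/- arXiv:1404.0525 — 2 statements merged into one kernel-verified Lean document; each statement's English description precedes it below -/
import Mathlib

section
/- Let E be a closed disc of radius r > 0 in ℝ² whose centre is at distance d from the origin, and let B be the circle of radius R > 0 centred at the origin, with E contained in the closed disc bounded by B (i.e. d + r ≤ R). Then there exists a triangle (the convex hull of three points each lying on the circle B) containing E if and only if d² ≤ R(R − 2r). -/
open Metric Set

local notation "E2" => EuclideanSpace ℝ (Fin 2)

noncomputable def V2 (s t : ℝ) : EuclideanSpace ℝ (Fin 2) :=
  (WithLp.equiv 2 (Fin 2 → ℝ)).symm ![s, t]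

@[simp] lemma V2_apply0 (s t : ℝ) : V2 s t 0 = s := rfl
@[simp] lemma V2_apply1 (s t : ℝ) : V2 s t 1 = t := rfl

lemma coords_sq (v : E2) : v 0 ^ 2 + v 1 ^ 2 = ‖v‖ ^ 2 := by
  rw [EuclideanSpace.norm_eq, Real.sq_sqrt (by positivity)]
  simp [Fin.sum_univ_two, sq_abs]

lemma dist_sq (v w : E2) : (v 0 - w 0) ^ 2 + (v 1 - w 1) ^ 2 = dist v w ^ 2 := by
  rw [dist_eq_norm, ← coords_sq (v - w)]
  simp [PiLp.sub_apply]

lemma convexHalf (l0 l1 t : ℝ) :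
    Convex ℝ {q : E2 | l0 * q 0 + l1 * q 1 ≤ t} := by
  refine convex_halfSpace_le ⟨fun u v => ?_, fun k u => ?_⟩ t
  · simp only [PiLp.add_apply]; ring
  · simp only [PiLp.smul_apply, smul_eq_mul]; ring

lemma norm_V2_eq (s t a : ℝ) (ha : 0 ≤ a) (h : s ^ 2 + t ^ 2 = a ^ 2) :
    ‖V2 s t‖ = a := by
  have h1 : ‖V2 s t‖ ^ 2 = a ^ 2 := by rw [← coords_sq]; simpa using h
  calc ‖V2 s t‖ = Real.sqrt (‖V2 s t‖ ^ 2) := (Real.sqrt_sq (norm_nonneg _)).symm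
  _ = Real.sqrt (a ^ 2) := by rw [h1]
  _ = a := Real.sqrt_sq ha

lemma mem_ball_shift (c : E2) (r k : ℝ) (v : E2) (h : ‖k • v‖ = r) :
    c + k • v ∈ closedBall c r := by
  simp [Metric.mem_closedBall, dist_eq_norm, add_sub_cancel_left, h]

set_option maxHeartbeats 2000000 in
set_option maxRecDepth 100000 in
theorem fwd_core (R r dd A0 A1 B0 B1 C0 C1 P0 P1 a b c x y z : ℝ)
    (hr : 0 < r) (hR : 0 < R)
    (hA : A0^2+A1^2 = R^2) (hB : B0^2+B1^2 = R^2) (hC : C0^2+C1^2 = R^2)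
    (hdd : dd = P0^2+P1^2)
    (ha2 : a^2 = (B0-C0)^2+(B1-C1)^2) (hb2 : b^2 = (C0-A0)^2+(C1-A1)^2)
    (hc2 : c^2 = (A0-B0)^2+(A1-B1)^2)
    (ha : 0 ≤ a) (hb : 0 ≤ b) (hc : 0 ≤ c)
    (tab : a ≤ b + c) (tbc : b ≤ a + c) (tca : c ≤ a + b)
    (hx : x = ((-1/2)*C1*P0 + (1/2)*C0*P1 + (1/2)*B1*P0 + (-1/2)*B1*C0 + (-1/2)*B0*P1 + (1/2)*B0*C1)) (hy : y = ((1/2)*C1*P0 + (-1/2)*C0*P1 + (-1/2)*A1*P0 + (1/2)*A1*C0 + (1/2)*A0*P1 + (-1/2)*A0*C1)) (hz : z = ((-1/2)*B1*P0 + (1/2)*B0*P1 + (1/2)*A1*P0 + (-1/2)*A1*B0 + (-1/2)*A0*P1 + (1/2)*A0*B1))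
    (hS : 0 < x + y + z)
    (hxr : r*a/2 ≤ x) (hyr : r*b/2 ≤ y) (hzr : r*c/2 ≤ z) :
    dd ≤ R*(R-2*r) := by
  have key1 : (x+y+z)^2*(R^2-dd) = a^2*(y*z) + b^2*(z*x) + c^2*(x*y) := by
    subst hx hy hz hdd
    linear_combination ((1/4)*C1^2*R^2 + (-1/4)*C1^3*P1 + (-1/4)*C0^2*C1*P1 + (-1/2)*B1*C1*R^2 + (1/4)*B1*C1^2*P1 + (1/4)*B1*C1^3 + (-1/4)*B1*C0*C1*P0 + (1/2)*B1*C0^2*P1 + (1/4)*B1*C0^2*C1 + (1/4)*B1^2*R^2 + (1/4)*B1^2*C1*P1 + (-1/2)*B1^2*C1^2 + (1/4)*B1^2*C0*P0 + (-1/2)*B1^2*C0^2 + (-1/4)*B1^3*P1 + (1/4)*B1^3*C1 + (1/4)*B0*C1^2*P0 + (-1/4)*B0*C0*C1*P1 + (-1/4)*B0*B1*C1*P0 + (-1/4)*B0*B1*C0*P1 + (1/2)*B0*B1*C0*C1 + (1/2)*B0^2*C1*P1 + (-1/2)*B0^2*C1^2 + (-1/4)*B0^2*B1*P1 + (1/4)*B0^2*B1*C1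 + (1/4)*A1*C0*C1*P0 + (-1/4)*A1*C0^2*P1 + (-1/4)*A1*B1*C0*P0 + (1/4)*A1*B1*C0^2 + (-1/4)*A1*B0*C1*P0 + (1/2)*A1*B0*C0*P1 + (-1/4)*A1*B0*C0*C1 + (1/4)*A1*B0*B1*P0 + (-1/4)*A1*B0*B1*C0 + (-1/4)*A1*B0^2*P1 + (1/4)*A1*B0^2*C1 + (-1/4)*A0*C1^2*P0 + (1/4)*A0*C0*C1*P1 + (1/2)*A0*B1*C1*P0 + (-1/4)*A0*B1*C0*P1 + (-1/4)*A0*B1*C0*C1 + (-1/4)*A0*B1^2*P0 + (1/4)*A0*B1^2*C0 + (-1/4)*A0*B0*C1*P1 + (1/4)*A0*B0*C1^2 + (1/4)*A0*B0*B1*P1 + (-1/4)*A0*B0*B1*C1)*hA + ((1/2)*C1*P1*R^2 + (-1/4)*C1^2*R^2 + (-1/4)*C1^3*P1 + (-1/4)*C0^2*C1*P1 + (-1/4)*B1*P1*R^2 + (1/4)*B1*C1*R^2 + (1/4)*B1*C0*C1*P0 + (-1/4)*B1*C0^2*P1 + (-1/4)*B0*C1^2*P0 + (1/4)*B0*C0*C1*P1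 + (-1/4)*A1*P1*R^2 + (-1/4)*A1*C1*R^2 + (1/4)*A1*C1^2*P1 + (1/4)*A1*C1^3 + (-1/4)*A1*C0*C1*P0 + (1/2)*A1*C0^2*P1 + (1/4)*A1*C0^2*C1 + (-1/4)*A1*B1*C0*P0 + (1/4)*A1*B1*C0^2 + (1/2)*A1*B0*C1*P0 + (-1/4)*A1*B0*C0*P1 + (-1/4)*A1*B0*C0*C1 + (1/4)*A1^2*R^2 + (-1/4)*A1^2*C1*P1 + (1/4)*A1^2*C0*P0 + (-1/2)*A1^2*C0^2 + (1/4)*A1^2*B1*P1 + (-1/4)*A1^2*B1*C1 + (-1/4)*A1^2*B0*P0 + (1/4)*A1^2*B0*C0 + (1/4)*A0*C1^2*P0 + (-1/4)*A0*C0*C1*P1 + (-1/4)*A0*B1*C1*P0 + (1/2)*A0*B1*C0*P1 + (-1/4)*A0*B1*C0*C1 + (-1/4)*A0*B0*C1*P1 + (1/4)*A0*B0*C1^2 + (-1/4)*A0*A1*C1*P0 + (-1/4)*A0*A1*C0*P1 + (1/2)*A0*A1*C0*C1 + (1/4)*A0*A1*B1*P0 + (-1/4)*A0*A1*B1*C0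 + (1/4)*A0*A1*B0*P1 + (-1/4)*A0*A1*B0*C1)*hB + ((-1/2)*C1*P1*R^2 + (1/4)*B1*P1*R^2 + (1/4)*B1*C1*R^2 + (-1/4)*B1^2*R^2 + (1/4)*B1^2*C1*P1 + (-1/4)*B1^2*C0*P0 + (1/4)*B0*B1*C1*P0 + (1/4)*B0*B1*C0*P1 + (1/4)*A1*P1*R^2 + (1/4)*A1*C1*R^2 + (1/2)*A1*B1*C0*P0 + (-1/4)*A1*B1^2*P1 + (-1/4)*A1*B1^2*C1 + (-1/4)*A1*B0*C1*P0 + (-1/4)*A1*B0*C0*P1 + (-1/4)*A1*B0*B1*P0 + (-1/4)*A1*B0*B1*C0 + (-1/4)*A1^2*R^2 + (1/4)*A1^2*C1*P1 + (-1/4)*A1^2*C0*P0 + (-1/4)*A1^2*B1*P1 + (-1/4)*A1^2*B1*C1 + (1/2)*A1^2*B1^2 + (1/4)*A1^2*B0*P0 + (1/4)*A1^2*B0*C0 + (-1/4)*A0*B1*C1*P0 + (-1/4)*A0*B1*C0*P1 + (1/4)*A0*B1^2*P0 + (1/4)*A0*B1^2*C0 + (1/2)*A0*B0*C1*P1 +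 (-1/4)*A0*B0*B1*P1 + (-1/4)*A0*B0*B1*C1 + (1/4)*A0*A1*C1*P0 + (1/4)*A0*A1*C0*P1 + (-1/4)*A0*A1*B1*P0 + (-1/4)*A0*A1*B1*C0 + (-1/4)*A0*A1*B0*P1 + (-1/4)*A0*A1*B0*C1 + (1/2)*A0*A1*B0*B1)*hC - ((-1/4)*B1*C1*P0^2 + (1/4)*B1*C0*P0*P1 + (1/4)*B0*C1*P0*P1 + (-1/4)*B0*C0*P1^2 + (1/4)*A1*C1*P0^2 + (-1/4)*A1*C0*P0*P1 + (1/4)*A1*B1*P0^2 + (-1/4)*A1*B1*C0*P0 + (-1/4)*A1*B0*P0*P1 + (-1/4)*A1*B0*C1*P0 + (1/2)*A1*B0*C0*P1 + (-1/4)*A1^2*P0^2 + (1/4)*A1^2*C0*P0 + (1/4)*A1^2*B0*P0 + (-1/4)*A1^2*B0*C0 + (-1/4)*A0*C1*P0*P1 + (1/4)*A0*C0*P1^2 + (-1/4)*A0*B1*P0*P1 + (1/2)*A0*B1*C1*P0 + (-1/4)*A0*B1*C0*P1 + (1/4)*A0*B0*P1^2 + (-1/4)*A0*B0*C1*P1 +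 (1/2)*A0*A1*P0*P1 + (-1/4)*A0*A1*C1*P0 + (-1/4)*A0*A1*C0*P1 + (-1/4)*A0*A1*B1*P0 + (1/4)*A0*A1*B1*C0 + (-1/4)*A0*A1*B0*P1 + (1/4)*A0*A1*B0*C1 + (-1/4)*A0^2*P1^2 + (1/4)*A0^2*C1*P1 + (1/4)*A0^2*B1*P1 + (-1/4)*A0^2*B1*C1)*ha2 - ((1/4)*B1*C1*P0^2 + (-1/4)*B1*C0*P0*P1 + (-1/4)*B1^2*P0^2 + (1/4)*B1^2*C0*P0 + (-1/4)*B0*C1*P0*P1 + (1/4)*B0*C0*P1^2 + (1/2)*B0*B1*P0*P1 + (-1/4)*B0*B1*C1*P0 + (-1/4)*B0*B1*C0*P1 + (-1/4)*B0^2*P1^2 + (1/4)*B0^2*C1*P1 + (-1/4)*A1*C1*P0^2 + (1/4)*A1*C0*P0*P1 + (1/4)*A1*B1*P0^2 + (-1/4)*A1*B1*C0*P0 + (-1/4)*A1*B0*P0*P1 + (1/2)*A1*B0*C1*P0 + (-1/4)*A1*B0*C0*P1 + (-1/4)*A1*B0*B1*P0 + (1/4)*A1*B0*B1*C0 + (1/4)*A1*B0^2*P1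 + (-1/4)*A1*B0^2*C1 + (1/4)*A0*C1*P0*P1 + (-1/4)*A0*C0*P1^2 + (-1/4)*A0*B1*P0*P1 + (-1/4)*A0*B1*C1*P0 + (1/2)*A0*B1*C0*P1 + (1/4)*A0*B1^2*P0 + (-1/4)*A0*B1^2*C0 + (1/4)*A0*B0*P1^2 + (-1/4)*A0*B0*C1*P1 + (-1/4)*A0*B0*B1*P1 + (1/4)*A0*B0*B1*C1)*hb2 - ((-1/4)*C1^2*P0^2 + (1/2)*C0*C1*P0*P1 + (-1/4)*C0^2*P1^2 + (1/4)*B1*C1*P0^2 + (-1/4)*B1*C0*P0*P1 + (-1/4)*B1*C0*C1*P0 + (1/4)*B1*C0^2*P1 + (-1/4)*B0*C1*P0*P1 + (1/4)*B0*C1^2*P0 + (1/4)*B0*C0*P1^2 + (-1/4)*B0*C0*C1*P1 + (1/4)*A1*C1*P0^2 + (-1/4)*A1*C0*P0*P1 + (-1/4)*A1*C0*C1*P0 + (1/4)*A1*C0^2*P1 + (-1/4)*A1*B1*P0^2 + (1/2)*A1*B1*C0*P0 + (-1/4)*A1*B1*C0^2 + (1/4)*A1*B0*P0*P1 + (-1/4)*A1*B0*C1*P0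 + (-1/4)*A1*B0*C0*P1 + (1/4)*A1*B0*C0*C1 + (-1/4)*A0*C1*P0*P1 + (1/4)*A0*C1^2*P0 + (1/4)*A0*C0*P1^2 + (-1/4)*A0*C0*C1*P1 + (1/4)*A0*B1*P0*P1 + (-1/4)*A0*B1*C1*P0 + (-1/4)*A0*B1*C0*P1 + (1/4)*A0*B1*C0*C1 + (-1/4)*A0*B0*P1^2 + (1/2)*A0*B0*C1*P1 + (-1/4)*A0*B0*C1^2)*hc2
  have key2 : (a*b*c - 4*R*(x+y+z)) * (a*b*c + 4*R*(x+y+z)) = 0 := by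
    subst hx hy hz
    linear_combination ((-3)*C1^2*R^2 + 1*C1^4 + 1*C0^2*R^2 + 2*C0^2*C1^2 + 1*C0^4 + 6*B1*C1*R^2 + (-2)*B1*C1^3 + (-2)*B1*C0^2*C1 + (-3)*B1^2*R^2 + 2*B1^2*C1^2 + 2*B1^2*C0^2 + (-2)*B1^3*C1 + 1*B1^4 + (-2)*B0*C0*R^2 + 2*B0*C0*C1^2 + 2*B0*C0^3 + (-8)*B0*B1*C0*C1 + 2*B0*B1^2*C0 + 1*B0^2*R^2 + 2*B0^2*C1^2 + (-6)*B0^2*C0^2 + (-2)*B0^2*B1*C1 + 2*B0^2*B1^2 + 2*B0^3*C0 + 1*B0^4 + (-2)*A1*C1^3 + (-2)*A1*C0^2*C1 + 2*A1*B1*C1^2 + (-2)*A1*B1*C0^2 + 2*A1*B1^2*C1 + (-2)*A1*B1^3 + 4*A1*B0*C0*C1 + 4*A1*B0*B1*C0 + (-2)*A1*B0^2*C1 + (-2)*A1*B0^2*B1 + 1*A1^2*C1^2 + 1*A1^2*C0^2 + (-2)*A1^2*B1*C1 + 1*A1^2*B1^2 + (-2)*A1^2*B0*C0 + 1*A1^2*B0^2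 + (-2)*A0*C0*C1^2 + (-2)*A0*C0^3 + 4*A0*B1*C0*C1 + (-2)*A0*B1^2*C0 + (-2)*A0*B0*C1^2 + 2*A0*B0*C0^2 + 4*A0*B0*B1*C1 + (-2)*A0*B0*B1^2 + 2*A0*B0^2*C0 + (-2)*A0*B0^3 + 1*A0^2*C1^2 + 1*A0^2*C0^2 + (-2)*A0^2*B1*C1 + 1*A0^2*B1^2 + (-2)*A0^2*B0*C0 + 1*A0^2*B0^2)*hA + (2*R^4 + (-1)*C1^2*R^2 + 1*C1^4 + (-5)*C0^2*R^2 + 2*C0^2*C1^2 + 1*C0^4 + (-2)*B1*C1*R^2 + (-2)*B1*C1^3 + (-2)*B1*C0^2*C1 + 1*B1^2*R^2 + 1*B1^2*C1^2 + 1*B1^2*C0^2 + 2*B0*C0*R^2 + (-2)*B0*C0*C1^2 + (-2)*B0*C0^3 + 1*B0^2*R^2 + 1*B0^2*C1^2 + 1*B0^2*C0^2 + 4*A1*C1*R^2 + (-2)*A1*C1^3 + (-2)*A1*C0^2*C1 + (-2)*A1*B1*R^2 + 2*A1*B1*C1^2 + (-2)*A1*B1*C0^2 + (-2)*A1*B1^2*C1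 + 4*A1*B0*C0*C1 + (-2)*A1*B0^2*C1 + (-4)*A1^2*R^2 + 8*A1^2*C0^2 + 4*A1^2*B1*C1 + (-4)*A1^2*B0*C0 + 2*A0*C0*C1^2 + 2*A0*C0^3 + 4*A0*B1*C0*C1 + (-2)*A0*B1^2*C0 + (-2)*A0*B0*R^2 + (-2)*A0*B0*C1^2 + 2*A0*B0*C0^2 + (-2)*A0*B0^2*C0 + (-8)*A0*A1*C0*C1 + 4*A0*A1*B1*C0 + 4*A0*A1*B0*C1)*hB + ((-2)*R^4 + 2*C1^2*R^2 + 2*C0^2*R^2 + (-4)*B1*C1*R^2 + 4*B1^2*R^2 + (-4)*A1*C1*R^2 + 2*A1*B1*R^2 + (-2)*A1*B1*C1^2 + (-2)*A1*B1*C0^2 + 4*A1*B1^2*C1 + 4*A1*B0*B1*C0 + 4*A1^2*R^2 + 4*A1^2*B1*C1 + (-8)*A1^2*B1^2 + (-4)*A1^2*B0*C0 + (-4)*A0*B1^2*C0 + 2*A0*B0*R^2 + (-2)*A0*B0*C1^2 + (-2)*A0*B0*C0^2 + 4*A0*B0*B1*C1 + 4*A0*A1*B1*C0 + 4*A0*A1*B0*C1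 + (-8)*A0*A1*B0*B1)*hC + (b^2*c^2)*ha2 + ((1*C1^2 + 1*C0^2 + (-2)*B1*C1 + 1*B1^2 + (-2)*B0*C0 + 1*B0^2)*c^2)*hb2 + ((1*C1^2 + 1*C0^2 + (-2)*B1*C1 + 1*B1^2 + (-2)*B0*C0 + 1*B0^2)*(1*C1^2 + 1*C0^2 + (-2)*A1*C1 + 1*A1^2 + (-2)*A0*C0 + 1*A0^2))*hc2
  have habc0 : 0 ≤ a*b*c := by positivity
  have hRS : 0 < R*(x+y+z) := mul_pos hR hS
  have habc : a*b*c = 4*R*(x+y+z) := by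
    rcases mul_eq_zero.mp key2 with h | h
    · linarith only [h, hRS, habc0]
    · linarith only [h, hRS, habc0]
  have hX : 0 ≤ x - r*a/2 := by linarith only [hxr]
  have hY : 0 ≤ y - r*b/2 := by linarith only [hyr]
  have hZ : 0 ≤ z - r*c/2 := by linarith only [hzr]
  have decomp : a^2*(y*z)+b^2*(z*x)+c^2*(x*y) - (r/2)*(a*b*c)*(x+y+z)
      = (r/2)*(b*c*(b+c-a)*(x - r*a/2) + c*a*(c+a-b)*(y - r*b/2) + a*b*(a+b-c)*(z - r*c/2))
        + a^2*((y-r*b/2)*(z-r*c/2)) + b^2*((z-r*c/2)*(x-r*a/2)) + c^2*((x-r*a/2)*(y-r*b/2)) := by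
    ring
  have t1 : 0 ≤ (r/2)*(b*c*(b+c-a)*(x - r*a/2)) :=
    mul_nonneg (by positivity) (mul_nonneg (mul_nonneg (mul_nonneg hb hc) (by linarith only [tab])) hX)
  have t2 : 0 ≤ (r/2)*(c*a*(c+a-b)*(y - r*b/2)) :=
    mul_nonneg (by positivity) (mul_nonneg (mul_nonneg (mul_nonneg hc ha) (by linarith only [tbc])) hY)
  have t3 : 0 ≤ (r/2)*(a*b*(a+b-c)*(z - r*c/2)) :=
    mul_nonneg (by positivity) (mul_nonneg (mul_nonneg (mul_nonneg ha hb) (by linarith only [tca])) hZ)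
  have t4 : 0 ≤ a^2*((y-r*b/2)*(z-r*c/2)) := mul_nonneg (sq_nonneg a) (mul_nonneg hY hZ)
  have t5 : 0 ≤ b^2*((z-r*c/2)*(x-r*a/2)) := mul_nonneg (sq_nonneg b) (mul_nonneg hZ hX)
  have t6 : 0 ≤ c^2*((x-r*a/2)*(y-r*b/2)) := mul_nonneg (sq_nonneg c) (mul_nonneg hX hY)
  have hml : (r/2)*(a*b*c)*(x+y+z) ≤ a^2*(y*z) + b^2*(z*x) + c^2*(x*y) := by
    linarith only [decomp, t1, t2, t3, t4, t5, t6]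
  have h1 : (x+y+z)^2*(2*R*r) ≤ (x+y+z)^2*(R^2-dd) := by
    rw [key1]
    calc (x+y+z)^2*(2*R*r) = (r/2)*(4*R*(x+y+z))*(x+y+z) := by ring
    _ = (r/2)*(a*b*c)*(x+y+z) := by rw [habc]
    _ ≤ _ := hml
  have hS2 : (0:ℝ) < (x+y+z)^2 := by positivity
  have hfin := le_of_mul_le_mul_left h1 hS2
  linarith only [hfin]

theorem hull_le_half (A B C : E2) (l0 l1 t : ℝ)
    (hA : l0 * A 0 + l1 * A 1 ≤ t) (hB : l0 * B 0 + l1 * B 1 ≤ t)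
    (hC : l0 * C 0 + l1 * C 1 ≤ t) :
    convexHull ℝ {A, B, C} ⊆ {q : E2 | l0 * q 0 + l1 * q 1 ≤ t} := by
  refine convexHull_min ?_ (convexHalf l0 l1 t)
  rintro v hv
  rcases hv with rfl | rfl | rfl
  exacts [hA, hB, hC]

set_option maxHeartbeats 2000000 in
set_option maxRecDepth 100000 in
theorem fwd (P A B C : E2) (r R : ℝ) (hr : 0 < r) (hR : 0 < R)
    (hnA : ‖A‖ = R) (hnB : ‖B‖ = R) (hnC : ‖C‖ = R)
    (hsub : Metric.closedBall P r ⊆ convexHull ℝ {A, B, C})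
    (hS : 0 < (B 0 - A 0) * (C 1 - A 1) - (B 1 - A 1) * (C 0 - A 0)) :
    ‖P‖ ^ 2 ≤ R * (R - 2 * r) := by
  have hA2 : A 0 ^ 2 + A 1 ^ 2 = R ^ 2 := by rw [coords_sq, hnA]
  have hB2 : B 0 ^ 2 + B 1 ^ 2 = R ^ 2 := by rw [coords_sq, hnB]
  have hC2 : C 0 ^ 2 + C 1 ^ 2 = R ^ 2 := by rw [coords_sq, hnC]
  have hBCne : B ≠ C := fun h => by rw [h] at hS; linarith only [hS]
  have hCAne : C ≠ A := fun h => by rw [h] at hS; linarith only [hS]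
  have hABne : A ≠ B := fun h => by rw [h] at hS; linarith only [hS]
  have hapos : 0 < dist B C := dist_pos.mpr hBCne
  have hbpos : 0 < dist C A := dist_pos.mpr hCAne
  have hcpos : 0 < dist A B := dist_pos.mpr hABne
  have ha2 : (dist B C) ^ 2 = (B 0 - C 0)^2 + (B 1 - C 1)^2 := (dist_sq B C).symm
  have hb2 : (dist C A) ^ 2 = (C 0 - A 0)^2 + (C 1 - A 1)^2 := (dist_sq C A).symm
  have hc2 : (dist A B) ^ 2 = (A 0 - B 0)^2 + (A 1 - B 1)^2 := (dist_sq A B).symm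
  -- halfplane inequalities for all points of the ball
  have hX : ∀ q ∈ Metric.closedBall P r,
      (C 1 - B 1) * q 0 + (B 0 - C 0) * q 1 ≤ B 0 * C 1 - B 1 * C 0 := fun q hq =>
    hull_le_half A B C _ _ _ (by nlinarith [hS]) (by nlinarith []) (by nlinarith []) (hsub hq)
  have hY : ∀ q ∈ Metric.closedBall P r,
      (A 1 - C 1) * q 0 + (C 0 - A 0) * q 1 ≤ C 0 * A 1 - C 1 * A 0 := fun q hq =>
    hull_le_half A B C _ _ _ (by nlinarith []) (by nlinarith [hS]) (by nlinarith []) (hsub hq)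
  have hZ : ∀ q ∈ Metric.closedBall P r,
      (B 1 - A 1) * q 0 + (A 0 - B 0) * q 1 ≤ A 0 * B 1 - A 1 * B 0 := fun q hq =>
    hull_le_half A B C _ _ _ (by nlinarith []) (by nlinarith []) (by nlinarith [hS]) (hsub hq)
  -- instantiate at well-chosen points of the ball
  have hnX : ‖V2 (C 1 - B 1) (B 0 - C 0)‖ = dist B C :=
    norm_V2_eq _ _ _ dist_nonneg (by linear_combination dist_sq B C)
  have hnY : ‖V2 (A 1 - C 1) (C 0 - A 0)‖ = dist C A :=
    norm_V2_eq _ _ _ dist_nonneg (by linear_combination dist_sq C A)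
  have hnZ : ‖V2 (B 1 - A 1) (A 0 - B 0)‖ = dist A B :=
    norm_V2_eq _ _ _ dist_nonneg (by linear_combination dist_sq A B)
  have hXP := hX _ (mem_ball_shift P r (r / dist B C) _
    (by rw [norm_smul, Real.norm_eq_abs, abs_of_nonneg (by positivity), hnX]
        field_simp))
  have hYP := hY _ (mem_ball_shift P r (r / dist C A) _
    (by rw [norm_smul, Real.norm_eq_abs, abs_of_nonneg (by positivity), hnY]
        field_simp))
  have hZP := hZ _ (mem_ball_shift P r (r / dist A B) _
    (by rw [norm_smul, Real.norm_eq_abs, abs_of_nonneg (by positivity), hnZ]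
        field_simp))
  simp only [PiLp.add_apply, PiLp.smul_apply, smul_eq_mul, V2_apply0, V2_apply1] at hXP hYP hZP
  have keyX : r / dist B C * ((C 1 - B 1)^2 + (B 0 - C 0)^2) = r * dist B C := by
    rw [show (C 1 - B 1)^2 + (B 0 - C 0)^2 = dist B C ^ 2 by linear_combination dist_sq B C]
    field_simp
  have keyY : r / dist C A * ((A 1 - C 1)^2 + (C 0 - A 0)^2) = r * dist C A := by
    rw [show (A 1 - C 1)^2 + (C 0 - A 0)^2 = dist C A ^ 2 by linear_combination dist_sq C A]
    field_simp
  have keyZ : r / dist A B * ((B 1 - A 1)^2 + (A 0 - B 0)^2) = r * dist A B := by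
    rw [show (B 1 - A 1)^2 + (A 0 - B 0)^2 = dist A B ^ 2 by linear_combination dist_sq A B]
    field_simp
  have hxr : r * dist B C / 2 ≤ ((-1/2)*(C 1)*(P 0) + (1/2)*(C 0)*(P 1) + (1/2)*(B 1)*(P 0) + (-1/2)*(B 1)*(C 0) + (-1/2)*(B 0)*(P 1) + (1/2)*(B 0)*(C 1)) := by nlinarith [hXP, keyX]
  have hyr : r * dist C A / 2 ≤ ((1/2)*(C 1)*(P 0) + (-1/2)*(C 0)*(P 1) + (-1/2)*(A 1)*(P 0) + (1/2)*(A 1)*(C 0) + (1/2)*(A 0)*(P 1) + (-1/2)*(A 0)*(C 1)) := by nlinarith [hYP, keyY]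
  have hzr : r * dist A B / 2 ≤ ((-1/2)*(B 1)*(P 0) + (1/2)*(B 0)*(P 1) + (1/2)*(A 1)*(P 0) + (-1/2)*(A 1)*(B 0) + (-1/2)*(A 0)*(P 1) + (1/2)*(A 0)*(B 1)) := by nlinarith [hZP, keyZ]
  have tab : dist B C ≤ dist C A + dist A B := by
    have h := dist_triangle B A C
    rw [dist_comm B A, dist_comm A C] at h; linarith only [h]
  have tbc : dist C A ≤ dist B C + dist A B := by
    have h := dist_triangle C B A
    rw [dist_comm C B, dist_comm B A] at h; linarith only [h]
  have tca : dist A B ≤ dist B C + dist C A := by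
    have h := dist_triangle A C B
    rw [dist_comm A C, dist_comm C B] at h; linarith only [h]
  exact fwd_core R r (‖P‖^2) (A 0) (A 1) (B 0) (B 1) (C 0) (C 1) (P 0) (P 1)
    (dist B C) (dist C A) (dist A B) ((-1/2)*(C 1)*(P 0) + (1/2)*(C 0)*(P 1) + (1/2)*(B 1)*(P 0) + (-1/2)*(B 1)*(C 0) + (-1/2)*(B 0)*(P 1) + (1/2)*(B 0)*(C 1)) ((1/2)*(C 1)*(P 0) + (-1/2)*(C 0)*(P 1) + (-1/2)*(A 1)*(P 0) + (1/2)*(A 1)*(C 0) + (1/2)*(A 0)*(P 1) + (-1/2)*(A 0)*(C 1)) ((-1/2)*(B 1)*(P 0) + (1/2)*(B 0)*(P 1) + (1/2)*(A 1)*(P 0) + (-1/2)*(A 1)*(B 0) + (-1/2)*(A 0)*(P 1) + (1/2)*(A 0)*(B 1))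
    hr hR hA2 hB2 hC2 (coords_sq P).symm
    (by linear_combination ha2) (by linear_combination hb2) (by linear_combination hc2)
    dist_nonneg dist_nonneg dist_nonneg tab tbc tca
    (by ring) (by ring) (by ring)
    (by linarith only [hS]) hxr hyr hzr

lemma mem_ball_single (P : E2) (r : ℝ) (hr : 0 ≤ r) (i : Fin 2) :
    P + EuclideanSpace.single i r ∈ Metric.closedBall P r := by
  simp [Metric.mem_closedBall, dist_eq_norm, add_sub_cancel_left,
    EuclideanSpace.norm_single, abs_of_nonneg hr]

set_option maxHeartbeats 1000000 in
theorem degen (P A B C : E2) (r : ℝ) (hr : 0 < r)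
    (hsub : Metric.closedBall P r ⊆ convexHull ℝ {A, B, C})
    (hS : (B 0 - A 0) * (C 1 - A 1) - (B 1 - A 1) * (C 0 - A 0) = 0) : False := by
  have hXle : ∀ q ∈ Metric.closedBall P r,
      (C 1 - B 1) * q 0 + (B 0 - C 0) * q 1 ≤ B 0 * C 1 - B 1 * C 0 := fun q hq =>
    hull_le_half A B C _ _ _ (by nlinarith [hS]) (by nlinarith []) (by nlinarith []) (hsub hq)
  have hXge : ∀ q ∈ Metric.closedBall P r,
      (B 1 - C 1) * q 0 + (C 0 - B 0) * q 1 ≤ B 1 * C 0 - B 0 * C 1 := fun q hq =>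
    hull_le_half A B C _ _ _ (by nlinarith [hS]) (by nlinarith []) (by nlinarith []) (hsub hq)
  have hYle : ∀ q ∈ Metric.closedBall P r,
      (A 1 - C 1) * q 0 + (C 0 - A 0) * q 1 ≤ C 0 * A 1 - C 1 * A 0 := fun q hq =>
    hull_le_half A B C _ _ _ (by nlinarith []) (by nlinarith [hS]) (by nlinarith []) (hsub hq)
  have hYge : ∀ q ∈ Metric.closedBall P r,
      (C 1 - A 1) * q 0 + (A 0 - C 0) * q 1 ≤ C 1 * A 0 - C 0 * A 1 := fun q hq =>
    hull_le_half A B C _ _ _ (by nlinarith []) (by nlinarith [hS]) (by nlinarith []) (hsub hq)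
  have m0 := mem_ball_single P r hr.le 0
  have m1 := mem_ball_single P r hr.le 1
  have mP := Metric.mem_closedBall_self hr.le (x := P)
  have e0 : ∀ j : Fin 2, (P + EuclideanSpace.single (0:Fin 2) r) j = P j + if j = 0 then r else 0 := by
    intro j; simp [PiLp.add_apply, EuclideanSpace.single_apply]
  have e1 : ∀ j : Fin 2, (P + EuclideanSpace.single (1:Fin 2) r) j = P j + if j = 1 then r else 0 := by
    intro j; simp [PiLp.add_apply, EuclideanSpace.single_apply]
  have hX0 := hXle _ m0; have hX0' := hXge _ m0
  have hX1 := hXle _ m1; have hX1' := hXge _ m1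
  have hY0 := hYle _ m0; have hY0' := hYge _ m0
  have hY1 := hYle _ m1; have hY1' := hYge _ m1
  have hXP := hXle P mP; have hXP' := hXge P mP
  have hYP := hYle P mP; have hYP' := hYge P mP
  rw [e0 0, e0 1] at hX0 hX0' hY0 hY0'
  rw [e1 0, e1 1] at hX1 hX1' hY1 hY1'
  simp only [if_neg (show ¬(1:Fin 2)=0 by decide), if_neg (show ¬(0:Fin 2)=1 by decide),
    reduceIte, add_zero] at hX0 hX0' hY0 hY0' hX1 hX1' hY1 hY1'
  -- deduce coordinates equal
  have hb1c1 : B 1 = C 1 := by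
    have h0 : (C 1 - B 1) * r = 0 := by linarith only [hX0, hX0', hXP, hXP']
    rcases mul_eq_zero.mp h0 with h | h
    · linarith only [h]
    · exact absurd h (ne_of_gt hr)
  have hb0c0 : B 0 = C 0 := by
    have h0 : (B 0 - C 0) * r = 0 := by linarith only [hX1, hX1', hXP, hXP']
    rcases mul_eq_zero.mp h0 with h | h
    · linarith only [h]
    · exact absurd h (ne_of_gt hr)
  have ha1c1 : A 1 = C 1 := by
    have h0 : (A 1 - C 1) * r = 0 := by linarith only [hY0, hY0', hYP, hYP']
    rcases mul_eq_zero.mp h0 with h | h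
    · linarith only [h]
    · exact absurd h (ne_of_gt hr)
  have ha0c0 : A 0 = C 0 := by
    have h0 : (C 0 - A 0) * r = 0 := by linarith only [hY1, hY1', hYP, hYP']
    rcases mul_eq_zero.mp h0 with h | h
    · linarith only [h]
    · exact absurd h (ne_of_gt hr)
  have hBC : B = C := by
    ext j; fin_cases j
    · exact hb0c0
    · exact hb1c1
  have hAC : A = C := by
    ext j; fin_cases j
    · exact ha0c0
    · exact ha1c1
  have hset : ({A, B, C} : Set E2) = {C} := by
    rw [hAC, hBC]; simp
  rw [hset, convexHull_singleton] at hsub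
  have h1 : P = C := hsub mP
  have h2 : P + EuclideanSpace.single (0:Fin 2) r = C := hsub m0
  have : P 0 + r = P 0 := by
    have : (P + EuclideanSpace.single (0:Fin 2) r) 0 = C 0 := by rw [h2]
    rw [e0 0] at this
    simp only [reduceIte] at this
    rw [h1] at this ⊢
    simpa using this
  linarith only [this, hr]

theorem mp_dir (c : E2) (r R d : ℝ) (hr : 0 < r) (hR : 0 < R) (hd : d = ‖c‖)
    (h : ∃ p : Fin 3 → E2, (∀ i, p i ∈ Metric.sphere (0:E2) R) ∧
      Metric.closedBall c r ⊆ convexHull ℝ (Set.range p)) :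
    d ^ 2 ≤ R * (R - 2*r) := by
  obtain ⟨p, hsph, hsub⟩ := h
  have hn : ∀ i, ‖p i‖ = R := fun i => by
    have := hsph i; rwa [mem_sphere_zero_iff_norm] at this
  have hrange : Set.range p = {p 0, p 1, p 2} := by
    ext v; constructor
    · rintro ⟨i, rfl⟩; fin_cases i <;> simp
    · rintro (rfl | rfl | rfl) <;> exact Set.mem_range_self _
  rw [hrange] at hsub
  rw [hd]
  rcases lt_trichotomy 0 ((p 1 0 - p 0 0) * (p 2 1 - p 0 1) - (p 1 1 - p 0 1) * (p 2 0 - p 0 0))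
    with h | h | h
  · exact fwd c (p 0) (p 1) (p 2) r R hr hR (hn 0) (hn 1) (hn 2) hsub h
  · exact (degen c (p 0) (p 1) (p 2) r hr hsub h.symm).elim
  · rw [Set.pair_comm (p 1) (p 2)] at hsub
    exact fwd c (p 0) (p 2) (p 1) r R hr hR (hn 0) (hn 2) (hn 1) hsub (by linarith only [h])

set_option maxHeartbeats 1000000 in
theorem bwd (c : E2) (r R d u0 u1 : ℝ) (hr : 0 < r) (hR : 0 < R)
    (hu : u0^2 + u1^2 = 1) (hc0 : c 0 = d * u0) (hc1 : c 1 = d * u1)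
    (hd0 : 0 ≤ d) (hdR : d < R) (hineq : d^2 ≤ R*(R - 2*r)) :
    ∃ p : Fin 3 → E2, (∀ i, p i ∈ Metric.sphere (0:E2) R) ∧
      Metric.closedBall c r ⊆ convexHull ℝ (Set.range p) := by
  have hRne : R ≠ 0 := hR.ne'
  set s : ℝ := (R - d)/(2*R) with hs_def
  have hs0 : 0 < s := div_pos (by linarith) (by linarith)
  have hs2 : s ≤ 1/2 := by rw [hs_def, div_le_iff₀ (by linarith)]; linarith
  set q : ℝ := Real.sqrt (1 - s^2) with hq_def
  have hq2 : q^2 = 1 - s^2 := Real.sq_sqrt (by nlinarith)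
  have hq0 : 0 < q := Real.sqrt_pos.mpr (by nlinarith)
  set P3 : Fin 3 → E2 := ![V2 (-R*u0) (-R*u1),
           V2 (R*((1-2*s^2)*u0 - 2*s*q*u1)) (R*((1-2*s^2)*u1 + 2*s*q*u0)),
           V2 (R*((1-2*s^2)*u0 + 2*s*q*u1)) (R*((1-2*s^2)*u1 - 2*s*q*u0))] with hP3_def
  refine ⟨P3, ?_, ?_⟩
  · intro i
    fin_cases i <;> rw [mem_sphere_zero_iff_norm]
    · exact norm_V2_eq _ _ _ hR.le (by linear_combination (R^2)*hu)
    · exact norm_V2_eq _ _ _ hR.le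
        (by linear_combination (R^2*((1-2*s^2)^2+(2*s*q)^2))*hu + (4*R^2*s^2)*hq2)
    · exact norm_V2_eq _ _ _ hR.le
        (by linear_combination (R^2*((1-2*s^2)^2+(2*s*q)^2))*hu + (4*R^2*s^2)*hq2)
  · intro xx hxx
    have hball : (xx 0 - d*u0)^2 + (xx 1 - d*u1)^2 ≤ r^2 := by
      have h1 := Metric.mem_closedBall.mp hxx
      have h2 : (xx 0 - c 0)^2 + (xx 1 - c 1)^2 = dist xx c^2 := dist_sq xx c
      rw [hc0, hc1] at h2
      nlinarith [dist_nonneg (x := xx) (y := c)]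
    set ξ : ℝ := xx 0 * u0 + xx 1 * u1 with hξ_def
    set η : ℝ := -(xx 0) * u1 + xx 1 * u0 with hη_def
    have hxi : (ξ - d)^2 + η^2 ≤ r^2 := by
      have e : (ξ - d)^2 + η^2 = (xx 0 - d*u0)^2 + (xx 1 - d*u1)^2 := by
        linear_combination (ξ + (xx 0 * u0 + xx 1 * u1) - 2*d)*hξ_def
          + (η + (-(xx 0) * u1 + xx 1 * u0))*hη_def + ((xx 0)^2 + (xx 1)^2 - d^2)*hu
      linarith [hball]
    have hxiub : ξ ≤ d + r := by nlinarith [hxi, sq_nonneg η, hr.le]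
    have h2Rq : 2*R*q^2 = R + d + (R^2-d^2)/(2*R) := by
      rw [hq2, hs_def]; field_simp; ring
    have hrρ : r ≤ (R^2-d^2)/(2*R) := by
      rw [le_div_iff₀ (by linarith)]; nlinarith [hineq]
    have hξub2 : ξ + R ≤ 2*R*q^2 := by rw [h2Rq]; linarith [hxiub, hrρ]
    have hsdR : s*(d+R) = (R^2-d^2)/(2*R) := by rw [hs_def]; field_simp; ring
    have hrs : r ≤ s*(d+R) := by rw [hsdR]; exact hrρ
    have hCS1 : -r ≤ s*(ξ-d) + q*η := by
      nlinarith [hxi, hq2, sq_nonneg (s*η - q*(ξ-d)), hr.le, sq_nonneg (s*(ξ-d) + q*η + r)]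
    have hCS2 : -r ≤ s*(ξ-d) - q*η := by
      nlinarith [hxi, hq2, sq_nonneg (s*η + q*(ξ-d)), hr.le, sq_nonneg (s*(ξ-d) - q*η + r)]
    have hnum1 : 0 ≤ s*(ξ+R) + q*η := by nlinarith [hCS1, hrs]
    have hnum2 : 0 ≤ s*(ξ+R) - q*η := by nlinarith [hCS2, hrs]
    set w : Fin 3 → ℝ := ![2*s*(2*R*q^2 - (ξ+R))/(4*R*s*q^2),
      (s*(ξ+R) + q*η)/(4*R*s*q^2), (s*(ξ+R) - q*η)/(4*R*s*q^2)] with hw_def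
    have hw : ∀ i, 0 ≤ w i := by
      intro i; fin_cases i
      · show 0 ≤ 2*s*(2*R*q^2 - (ξ+R))/(4*R*s*q^2)
        apply div_nonneg _ (by positivity)
        have : 0 ≤ 2*R*q^2 - (ξ+R) := by linarith [hξub2]
        positivity
      · exact div_nonneg hnum1 (by positivity)
      · exact div_nonneg hnum2 (by positivity)
    have hwsum : ∑ i, w i = 1 := by
      rw [Fin.sum_univ_three]
      show 2*s*(2*R*q^2 - (ξ+R))/(4*R*s*q^2) + (s*(ξ+R) + q*η)/(4*R*s*q^2)
        + (s*(ξ+R) - q*η)/(4*R*s*q^2) = 1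
      field_simp
      ring
    have hz : ∀ i ∈ (Finset.univ : Finset (Fin 3)), P3 i ∈ Set.range P3 :=
      fun i _ => Set.mem_range_self i
    have hmem := Finset.centerMass_mem_convexHull Finset.univ
      (fun i _ => hw i) (by rw [hwsum]; norm_num) hz
    have hcm : Finset.univ.centerMass w P3 = xx := by
      rw [Finset.centerMass_eq_of_sum_1 _ _ hwsum, Fin.sum_univ_three]
      ext j
      fin_cases j
      · show w 0 * (-R*u0) + w 1 * (R*((1-2*s^2)*u0 - 2*s*q*u1))
          + w 2 * (R*((1-2*s^2)*u0 + 2*s*q*u1)) = xx 0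
        show 2*s*(2*R*q^2 - (ξ+R))/(4*R*s*q^2) * (-R*u0)
          + (s*(ξ+R) + q*η)/(4*R*s*q^2) * (R*((1-2*s^2)*u0 - 2*s*q*u1))
          + (s*(ξ+R) - q*η)/(4*R*s*q^2) * (R*((1-2*s^2)*u0 + 2*s*q*u1)) = xx 0
        rw [show xx 0 = ξ*u0 - η*u1 by
          linear_combination (-u0)*hξ_def + u1*hη_def + (-(xx 0))*hu]
        rw [show 2*s*(2*R*q^2 - (ξ+R))/(4*R*s*q^2) * (-R*u0)
          + (s*(ξ+R) + q*η)/(4*R*s*q^2) * (R*((1-2*s^2)*u0 - 2*s*q*u1))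
          + (s*(ξ+R) - q*η)/(4*R*s*q^2) * (R*((1-2*s^2)*u0 + 2*s*q*u1))
          = (2*s*(2*R*q^2 - (ξ+R)) * (-R*u0)
            + (s*(ξ+R) + q*η) * (R*((1-2*s^2)*u0 - 2*s*q*u1))
            + (s*(ξ+R) - q*η) * (R*((1-2*s^2)*u0 + 2*s*q*u1)))/(4*R*s*q^2) by ring]
        rw [div_eq_iff (by positivity : (0:ℝ) < 4*R*s*q^2).ne']
        linear_combination ((-4)*R*s*u0*ξ + (-4)*R^2*s*u0)*hq2
      · show 2*s*(2*R*q^2 - (ξ+R))/(4*R*s*q^2) * (-R*u1)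
          + (s*(ξ+R) + q*η)/(4*R*s*q^2) * (R*((1-2*s^2)*u1 + 2*s*q*u0))
          + (s*(ξ+R) - q*η)/(4*R*s*q^2) * (R*((1-2*s^2)*u1 - 2*s*q*u0)) = xx 1
        rw [show xx 1 = ξ*u1 + η*u0 by
          linear_combination (-u1)*hξ_def + (-u0)*hη_def + (-(xx 1))*hu]
        rw [show 2*s*(2*R*q^2 - (ξ+R))/(4*R*s*q^2) * (-R*u1)
          + (s*(ξ+R) + q*η)/(4*R*s*q^2) * (R*((1-2*s^2)*u1 + 2*s*q*u0))
          + (s*(ξ+R) - q*η)/(4*R*s*q^2) * (R*((1-2*s^2)*u1 - 2*s*q*u0))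
          = (2*s*(2*R*q^2 - (ξ+R)) * (-R*u1)
            + (s*(ξ+R) + q*η) * (R*((1-2*s^2)*u1 + 2*s*q*u0))
            + (s*(ξ+R) - q*η) * (R*((1-2*s^2)*u1 - 2*s*q*u0)))/(4*R*s*q^2) by ring]
        rw [div_eq_iff (by positivity : (0:ℝ) < 4*R*s*q^2).ne']
        linear_combination ((-4)*R*s*u1*ξ + (-4)*R^2*s*u1)*hq2
    rw [← hcm]
    exact hmem

/-- **Nested triangle criterion for a disc in a circle.**
Let `E` be the closed disc of radius `r > 0` centred at `c ∈ ℝ²` with `d = ‖c‖`,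
and let `B` be the circle of radius `R > 0` about the origin, with `E` contained
in the closed disc bounded by `B` (i.e. `d + r ≤ R`).  Then a triangle with all
three vertices on `B` contains `E` iff `d² ≤ R(R − 2r)`. -/
theorem nested_triangle_disc_in_circle
    (c : EuclideanSpace ℝ (Fin 2)) (r R d : ℝ) (hr : 0 < r) (hR : 0 < R)
    (hd : d = ‖c‖) (hcontained : d + r ≤ R) :
    (∃ p : Fin 3 → EuclideanSpace ℝ (Fin 2),
        (∀ i, p i ∈ Metric.sphere (0 : EuclideanSpace ℝ (Fin 2)) R) ∧
        Metric.closedBall c r ⊆ convexHull ℝ (Set.range p)) ↔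
      d ^ 2 ≤ R * (R - 2 * r) := by
  constructor
  · exact fun h => mp_dir c r R d hr hR hd h
  · intro hineq
    have hd0 : 0 ≤ d := hd ▸ norm_nonneg c
    have hdR : d < R := by linarith
    by_cases hc : c = 0
    · have hd' : d = 0 := by rw [hd, hc, norm_zero]
      exact bwd c r R d 1 0 hr hR (by norm_num)
        (by rw [hc, hd']; simp) (by rw [hc, hd']; simp) hd0 hdR hineq
    · have hdpos : 0 < d := by rw [hd]; exact norm_pos_iff.mpr hc
      have h2 : c 0 ^ 2 + c 1 ^ 2 = d ^ 2 := by rw [coords_sq, ← hd]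
      refine bwd c r R d (c 0 / d) (c 1 / d) hr hR ?_ ?_ ?_ hd0 hdR hineq
      · field_simp
        linarith [h2]
      · field_simp
      · field_simp
end

section
/- (Euler inequality in dimension 3.) Let T be a tetrahedron in ℝ³, i.e. the convex hull of four affinely independent points, let R be its circumradius (the radius of the unique sphere passing through its four vertices) and let r be its inradius (the radius of the largest closed ball contained in T). Then R ≥ 3r. -/
open RealInnerProductSpace

/-- **Euler's inequality in dimension 3.**
Let `T` be a tetrahedron in `ℝ³`, the convex hull of four affinely independent points
`A, B, C, D`.  Let `R` be its circumradius (the radius of the sphere through the four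
vertices, i.e. there is a point equidistant from `A`, `B`, `C`, `D` at distance `R`)
and let `r` be its inradius (the radius of the largest closed ball contained in `T`:
some closed ball of radius `r` is contained in `T`, and any closed ball contained in
`T` has radius at most `r`).  Then `R ≥ 3r`. -/
theorem euler_inequality_dim3
    (A B C D : EuclideanSpace ℝ (Fin 3))
    (hABCD : AffineIndependent ℝ ![A, B, C, D])
    (T : Set (EuclideanSpace ℝ (Fin 3)))
    (hT : T = convexHull ℝ {A, B, C, D})
    (R r : ℝ)
    (hR : ∃ O : EuclideanSpace ℝ (Fin 3),
      dist O A = R ∧ dist O B = R ∧ dist O C = R ∧ dist O D = R)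
    (hr_in : ∃ I : EuclideanSpace ℝ (Fin 3), Metric.closedBall I r ⊆ T)
    (hr_max : ∀ (s : ℝ) (x : EuclideanSpace ℝ (Fin 3)),
      Metric.closedBall x s ⊆ T → s ≤ r) :
    R ≥ 3 * r := by
  classical
  obtain ⟨O, hOA, hOB, hOC, hOD⟩ := hR
  obtain ⟨I, hI⟩ := hr_in
  have hR0 : 0 ≤ R := hOA ▸ dist_nonneg
  rcases le_or_gt r 0 with hr0 | hr0
  · linarith
  -- the four points form an affine basis
  have htot : affineSpan ℝ (Set.range ![A, B, C, D]) = ⊤ := by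
    rw [hABCD.affineSpan_eq_top_iff_card_eq_finrank_add_one]
    simp [finrank_euclideanSpace]
  let b : AffineBasis (Fin 4) ℝ (EuclideanSpace ℝ (Fin 3)) := ⟨![A, B, C, D], hABCD, htot⟩
  set P : Fin 4 → EuclideanSpace ℝ (Fin 3) := ![A, B, C, D] with hP
  have hP0 : P 0 = A := rfl
  have hP1 : P 1 = B := rfl
  have hP2 : P 2 = C := rfl
  have hP3 : P 3 = D := rfl
  set w : Fin 4 → (EuclideanSpace ℝ (Fin 3) →ᵃ[ℝ] ℝ) := fun i => b.coord i with hw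
  have hdist : ∀ i, dist O (P i) = R := by
    intro i
    fin_cases i
    exacts [hOA, hOB, hOC, hOD]
  -- coordinates are nonneg on T
  have hnonneg : ∀ x ∈ T, ∀ i, 0 ≤ w i x := by
    intro x hx i
    have hrange : Set.range ⇑b = ({A, B, C, D} : Set (EuclideanSpace ℝ (Fin 3))) := by
      show Set.range ![A, B, C, D] = _
      ext z
      simp only [Matrix.range_cons, Matrix.range_empty, Set.mem_insert_iff,
        Set.union_empty, Set.mem_union, Set.mem_singleton_iff]
    have h2 := b.convexHull_eq_nonneg_coord
    rw [hrange] at h2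
    rw [hT, h2] at hx
    exact hx i
  -- difference formula
  have hdiff : ∀ (i) (x y : EuclideanSpace ℝ (Fin 3)),
      w i x = (w i).linear (x - y) + w i y := by
    intro i x y
    conv_lhs => rw [show x = (x - y) +ᵥ y by simp]
    rw [AffineMap.map_vadd]
    rfl
  -- Riesz representatives of the linear parts
  set u : Fin 4 → EuclideanSpace ℝ (Fin 3) := fun i =>
    (InnerProductSpace.toDual ℝ (EuclideanSpace ℝ (Fin 3))).symm
      (LinearMap.toContinuousLinearMap (w i).linear) with hu
  have huv : ∀ (i) (v : EuclideanSpace ℝ (Fin 3)), ⟪u i, v⟫ = (w i).linear v := by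
    intro i v
    simp [hu, InnerProductSpace.toDual_symm_apply]
  have hwP : ∀ i j, w i (P j) = if i = j then 1 else 0 := fun i j => b.coord_apply i j
  have hlin : ∀ i j, (w i).linear (P j - P i) = (if i = j then 1 else 0) - 1 := by
    intro i j
    have := hdiff i (P j) (P i)
    rw [hwP i j, hwP i i, if_pos rfl] at this
    linarith
  -- the linear parts are nonzero
  have hu0 : ∀ i, u i ≠ 0 := by
    intro i h
    obtain ⟨j, hj⟩ : ∃ j : Fin 4, i ≠ j := by
      rcases eq_or_ne i 0 with h0 | h0
      · exact ⟨1, by simp [h0]⟩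
      · exact ⟨0, h0⟩
    have h1 : (w i).linear (P j - P i) = -1 := by rw [hlin i j, if_neg hj]; ring
    rw [← huv, h, inner_zero_left] at h1
    norm_num at h1
  -- inradius inequality: w i I ≥ r * ‖u i‖
  have hIin : ∀ i, r * ‖u i‖ ≤ w i I := by
    intro i
    have hnu : (0:ℝ) < ‖u i‖ := norm_pos_iff.mpr (hu0 i)
    have hyball : I - (r / ‖u i‖) • u i ∈ Metric.closedBall I r := by
      rw [Metric.mem_closedBall, dist_eq_norm]
      rw [show I - (r / ‖u i‖) • u i - I = -((r / ‖u i‖) • u i) by abel]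
      rw [norm_neg, norm_smul, Real.norm_eq_abs, abs_of_pos (by positivity),
        div_mul_cancel₀ _ (ne_of_gt hnu)]
    have h0 : 0 ≤ w i (I - (r / ‖u i‖) • u i) := hnonneg _ (hI hyball) i
    have hlin2 : (w i).linear (I - (r / ‖u i‖) • u i - I) = -(r * ‖u i‖) := by
      rw [show I - (r / ‖u i‖) • u i - I = -((r / ‖u i‖) • u i) by abel,
        LinearMap.map_neg, LinearMap.map_smul, ← huv,
        real_inner_self_eq_norm_mul_norm, smul_eq_mul]
      field_simp
    have := hdiff i (I - (r / ‖u i‖) • u i) I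
    rw [hlin2] at this
    linarith
  -- the shrunken circumcenter and face centroids
  set O' : EuclideanSpace ℝ (Fin 3) := (3:ℝ)⁻¹ • (A + B + C + D - O) with hO'
  set G : Fin 4 → EuclideanSpace ℝ (Fin 3) :=
    fun i => (3:ℝ)⁻¹ • (A + B + C + D - P i) with hG
  have hwG : ∀ i, w i (G i) = 0 := by
    intro i
    have hdec : G i - P i =
        (3:ℝ)⁻¹ • ((P 0 - P i) + (P 1 - P i) + (P 2 - P i) + (P 3 - P i)) := by
      simp only [hG, hP0, hP1, hP2, hP3]
      module
    have hlinsum : (w i).linear (G i - P i) = -1 := by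
      rw [hdec, LinearMap.map_smul, LinearMap.map_add, LinearMap.map_add, LinearMap.map_add,
        hlin i 0, hlin i 1, hlin i 2, hlin i 3, smul_eq_mul]
      have hone : (if i = 0 then (1:ℝ) else 0) + (if i = 1 then (1:ℝ) else 0)
          + (if i = 2 then (1:ℝ) else 0) + (if i = 3 then (1:ℝ) else 0) = 1 := by
        have : ∑ j : Fin 4, (if i = j then (1:ℝ) else 0) = 1 := by simp
        rw [Fin.sum_univ_four] at this
        linarith
      linarith
    have := hdiff i (G i) (P i)
    rw [hlinsum, hwP i i, if_pos rfl] at this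
    linarith
  have hO'G : ∀ i, O' - G i = (3:ℝ)⁻¹ • (P i - O) := by
    intro i
    simp only [hO', hG]
    module
  have hOout : ∀ i, w i O' ≤ R / 3 * ‖u i‖ := by
    intro i
    have hlin3 : (w i).linear (O' - G i) = (3:ℝ)⁻¹ * ⟪u i, P i - O⟫ := by
      rw [hO'G i, LinearMap.map_smul, ← huv, smul_eq_mul]
    have hcs : ⟪u i, P i - O⟫ ≤ ‖u i‖ * ‖P i - O‖ := real_inner_le_norm _ _
    have hn : ‖P i - O‖ = R := by
      rw [← dist_eq_norm, dist_comm]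
      exact hdist i
    rw [hn] at hcs
    have := hdiff i O' (G i)
    rw [hwG i, add_zero, hlin3] at this
    rw [this]
    nlinarith
  -- summing up
  have hsumI : (1:ℝ) = ∑ i, w i I := (b.sum_coord_apply_eq_one I).symm
  have hsumO' : (1:ℝ) = ∑ i, w i O' := (b.sum_coord_apply_eq_one O').symm
  set S : ℝ := ∑ i, ‖u i‖ with hS
  have hS0 : 0 < S := by
    rw [hS]
    exact Finset.sum_pos (fun i _ => norm_pos_iff.mpr (hu0 i)) Finset.univ_nonempty
  have h1 : r * S ≤ 1 := by
    rw [hS, Finset.mul_sum, hsumI]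
    exact Finset.sum_le_sum fun i _ => hIin i
  have h2 : (1:ℝ) ≤ R / 3 * S := by
    rw [hS, Finset.mul_sum, hsumO']
    exact Finset.sum_le_sum fun i _ => hOout i
  have h3 : r ≤ R / 3 := by
    have h4 := h1.trans h2
    rw [mul_comm r S, mul_comm (R / 3) S] at h4
    exact le_of_mul_le_mul_left h4 hS0
  linarith
end
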